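/- If C is a monoidal category, then the Day convolution product F ⊗_D G, defined by (F ⊗_D G)(c) = ∫^{(c₀,c₁)} F(c₀) × G(c₁) × Hom_C(c₀ ⊗ c₁, c), together with unit I_D = Hom_C(I, -), makes the copresheaf category [C ⥤ Type] into a monoidal category. -/

import Mathlib

open CategoryTheory Opposite

universe u v

namespace DayPaper

variable {B C : Type} [SmallCategory B] [SmallCategory C]

/-- A point of the coend defining the Day extension (left Kan extension) of a
copresheaf `P` along `θ`, at `c`. -/
structure DayPt (θ : B ⥤ C) (P : B ⥤ Type) (c : C) : Type where
  pt : B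
  elt : P.obj pt
  arr : θ.obj pt ⟶ c

/-- The relation generating the coend quotient. -/
def DayRel (θ : B ⥤ C) (P : B ⥤ Type) (c : C) : DayPt θ P c → DayPt θ P c → Prop :=
  fun x y => ∃ f : x.pt ⟶ y.pt, P.map f x.elt = y.elt ∧ x.arr = θ.map f ≫ y.arr

/-- The coend `∫^{b} P(b) × Hom(θ b, c)`. -/
def DayObj (θ : B ⥤ C) (P : B ⥤ Type) (c : C) : Type := Quot (DayRel θ P c)

/-- The Day extension of a copresheaf `P` along `θ`, as a copresheaf on `C`. -/
def DayCopresheaf (θ : B ⥤ C) (P : B ⥤ Type) : C ⥤ Type where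
  obj c := DayObj θ P c
  map {c c'} g := TypeCat.ofHom (Quot.map (fun x => ⟨x.pt, x.elt, x.arr ≫ g⟩)
    (by rintro x y ⟨f, h1, h2⟩; exact ⟨f, h1, by dsimp; rw [h2, Category.assoc]⟩))
  map_id c := by
    ext q
    induction q using Quot.ind with
    | _ x => exact congrArg (Quot.mk _) (by rcases x with ⟨b, p, a⟩; simp)
  map_comp {c c' c''} g g' := by
    ext q
    induction q using Quot.ind with
    | _ x => exact congrArg (Quot.mk _) (by rcases x with ⟨b, p, a⟩; simp)

/-- The Day extension, as a functor on copresheaf categories. -/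
def DayExtGen (θ : B ⥤ C) : (B ⥤ Type) ⥤ (C ⥤ Type) where
  obj P := DayCopresheaf θ P
  map {P Q} η :=
    { app := fun c => TypeCat.ofHom (Quot.map (fun x => ⟨x.pt, η.app x.pt x.elt, x.arr⟩)
        (by
          rintro x y ⟨f, h1, h2⟩
          exact ⟨f, by dsimp; rw [← h1, FunctorToTypes.naturality], h2⟩))
      naturality := by
        intro c c' g
        ext q
        induction q using Quot.ind with
        | _ x => rfl }
  map_id P := by
    ext c q
    induction q using Quot.ind with
    | _ x => rfl
  map_comp {P Q R} η η' := by
    ext c q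
    induction q using Quot.ind with
    | _ x => rfl

variable {ι : Type}

/-- The external product of a family of copresheaves. -/
def extProd (F : ι → (C ⥤ Type)) : (ι → C) ⥤ Type where
  obj x := ∀ i, (F i).obj (x i)
  map f := TypeCat.ofHom fun p => fun i => (F i).map (f i) (p i)
  map_id x := by ext p i; simp
  map_comp f g := by ext p i; simp

/-- The external product, as a functor. -/
def extProdFunctor (ι : Type) (C : Type) [SmallCategory C] :
    (ι → (C ⥤ Type)) ⥤ ((ι → C) ⥤ Type) where
  obj := extProd
  map {F G} α :=
    { app := fun x => TypeCat.ofHom fun p => fun i => (α i).app (x i) (p i)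
      naturality := by
        intro x y f
        ext p
        funext i
        exact NatTrans.naturality_apply (α i) (f i) (p i) }
  map_id F := by ext x p; rfl
  map_comp α β := by ext x p; rfl

/-- Reindexing of pi-categories along a map of index types. -/
def reindexPi {A : Type u} [Category.{v} A] {ι' ι : Type} (h : ι' → ι) :
    (ι → A) ⥤ (ι' → A) where
  obj x := fun i' => x (h i')
  map f := fun i' => f (h i')
  map_id _x := rfl
  map_comp _f _g := rfl

/-- The tuple `(θ₁, …, θₙ)` of a family of multi-ary operations. -/
def tupleFunctor {κ : ι → Type} (θs : ∀ i, (κ i → C) ⥤ C) :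
    ((Σ i, κ i) → C) ⥤ (ι → C) where
  obj x := fun i => (θs i).obj (fun s => x ⟨i, s⟩)
  map f := fun i => (θs i).map (fun s => f ⟨i, s⟩)
  map_id x := by funext i; exact (θs i).map_id _
  map_comp f g := by funext i; exact (θs i).map_comp _ _

/-- Multi-composition of multi-ary operations on `C`. -/
def mc {κ : ι → Type} (θ : (ι → C) ⥤ C) (θs : ∀ i, (κ i → C) ⥤ C) :
    ((Σ i, κ i) → C) ⥤ C :=
  tupleFunctor θs ⋙ θ

/-- The Day extension of a (total) `ι`-ary operation. -/
def DayExtFunctor (θ : (ι → C) ⥤ C) : (ι → (C ⥤ Type)) ⥤ (C ⥤ Type) :=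
  extProdFunctor ι C ⋙ DayExtGen θ

end DayPaper

open DayPaper CategoryTheory MonoidalCategory Opposite

/-- The tensor product of a monoidal category, as a functor `C × C ⥤ C`. -/
def tensorBifunctor (C : Type) [SmallCategory C] [MonoidalCategory C] :
    C × C ⥤ C where
  obj p := p.1 ⊗ p.2
  map f := f.1 ⊗ₘ f.2
  map_id p := by simp
  map_comp f g := by simp [CategoryTheory.MonoidalCategory.tensorHom_comp_tensorHom]

/-- The external product of two copresheaves. -/
def pairProd {C : Type} [SmallCategory C] (F G : C ⥤ Type) : C × C ⥤ Type where
  obj p := F.obj p.1 × G.obj p.2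
  map f := TypeCat.ofHom fun x => (F.map f.1 x.1, G.map f.2 x.2)
  map_id p := by ext x <;> simp
  map_comp f g := by ext x <;> simp

/-- The Day convolution of two copresheaves:
`(F ⊗_D G)(c) = ∫^{(c₀,c₁)} F(c₀) × G(c₁) × Hom(c₀ ⊗ c₁, c)`. -/
def dayTensor {C : Type} [SmallCategory C] [MonoidalCategory C]
    (F G : C ⥤ Type) : C ⥤ Type :=
  DayCopresheaf (tensorBifunctor C) (pairProd F G)

/-!
Mathlib (`CategoryTheory.MonoidalCategory.DayFunctor`) puts a monoidal structure on `C ⥤ Type`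
whose tensor product and unit are *pointwise* left Kan extensions, of `F ⊠ G` along `⊗` and of the
point along `𝟙_ C`. In `Type` the colimit computing a pointwise left Kan extension at `c` is the
quotient of `Σ (b, θ b ⟶ c), P b` by the morphisms of `CostructuredArrow θ c`, which is exactly
the coend `DayObj θ P c`. Uniqueness of Kan extensions then identifies the tensor with `dayTensor`
and the unit with the Day extension of the point, which is `Hom_C(𝟙_ C, -)`; the monoidal structure
itself is transported along the tautological equivalence `C ⊛⥤ Type ≌ C ⥤ Type`.
-/

namespace DayPaper.DayCopresheaf

variable {B C : Type} [SmallCategory B] [SmallCategory C] (θ : B ⥤ C) (P : B ⥤ Type)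

def unit : P ⟶ θ ⋙ DayCopresheaf θ P where
  app b := TypeCat.ofHom fun p => Quot.mk _ ⟨b, p, 𝟙 (θ.obj b)⟩
  naturality b b' f := by
    ext p
    exact (Quot.sound ⟨f, rfl, by simp⟩).symm

def isPointwiseLeftKanExtension :
    (Functor.LeftExtension.mk _ (unit θ P)).IsPointwiseLeftKanExtension := fun c =>
  { desc s := TypeCat.ofHom (Quot.lift (fun x => s.ι.app (CostructuredArrow.mk x.arr) x.elt)
      (by
        rintro x y ⟨f, hP, hθ⟩
        rw [← hP]
        exact (s.w_apply (CostructuredArrow.homMk f hθ.symm :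
          CostructuredArrow.mk x.arr ⟶ CostructuredArrow.mk y.arr) x.elt).symm))
    fac s j := by
      ext p
      change s.ι.app (CostructuredArrow.mk (𝟙 _ ≫ j.hom)) p = s.ι.app j p
      rw [Category.id_comp]
      rfl
    uniq s m hm := by
      ext ⟨b, p, f⟩
      refine Eq.trans ?_ (ConcreteCategory.congr_hom (hm (CostructuredArrow.mk f)) p)
      change m (Quot.mk _ _) = m (Quot.mk _ ⟨b, p, 𝟙 _ ≫ f⟩)
      rw [Category.id_comp] }

instance isLeftKanExtension : (DayCopresheaf θ P).IsLeftKanExtension (unit θ P) :=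
  (isPointwiseLeftKanExtension θ P).isLeftKanExtension

def fromPUnitIsoCoyoneda (c₀ : C) :
    DayCopresheaf (Functor.fromPUnit.{0} c₀) (Functor.fromPUnit.{0} PUnit) ≅
      coyoneda.obj (op c₀) :=
  NatIso.ofComponents (fun c => Equiv.toIso
    { toFun := Quot.lift DayPt.arr (by rintro x y ⟨f, -, h⟩; simpa using h)
      invFun f := Quot.mk _ ⟨⟨⟨⟩⟩, ⟨⟩, f⟩
      left_inv := by rintro ⟨⟨⟨⟨⟩⟩, ⟨⟩, f⟩⟩; rfl
      right_inv _ := rfl })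
    (by
      intros
      ext q
      induction q using Quot.ind
      rfl)

end DayPaper.DayCopresheaf

noncomputable section

open DayFunctor ExternalProduct

variable {C : Type} [SmallCategory C] [MonoidalCategory C]

def externalProductIsoPairProd (F G : C ⥤ Type) : F ⊠ G ≅ pairProd F G :=
  NatIso.ofComponents (fun _ => Iso.refl _) (by intros; rfl)

instance dayTensor_isLeftKanExtension (F G : C ⥤ Type) :
    (dayTensor F G).IsLeftKanExtension (L := tensor C)
      (DayCopresheaf.unit (tensorBifunctor C) (pairProd F G)) :=
  DayCopresheaf.isLeftKanExtension _ _

def tensorFunctorIsoDayTensor (F G : C ⥤ Type) :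
    (DayFunctor.mk F ⊗ DayFunctor.mk G).functor ≅ dayTensor F G :=
  Functor.leftKanExtensionUniqueOfIso _ (DayFunctor.η _ _) (externalProductIsoPairProd F G) _
    (DayCopresheaf.unit (tensorBifunctor C) (pairProd F G))

variable (C) in
def unitFunctorIsoCoyoneda : (𝟙_ (C ⊛⥤ Type)).functor ≅ coyoneda.obj (op (𝟙_ C)) :=
  -- Mathlib's Kan extension property is stated for `E.right` and `E.hom` of a `LeftExtension` `E`,
  -- a form instance search does not match, so it is passed explicitly.
  @Functor.leftKanExtensionUnique _ _ _ _ _ _ _ _ _ _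
    (LawfulDayConvolutionMonoidalCategoryStruct.isPointwiseLeftKanExtensionUnitUnit
      C Type (C ⊛⥤ Type)).isLeftKanExtension _ (DayCopresheaf.unit _ _) _ ≪≫
    DayCopresheaf.fromPUnitIsoCoyoneda (𝟙_ C)

end

/-- Day convolution makes the copresheaf category `[C ⥤ Type]` into a monoidal
category, with tensor the Day convolution and unit the representable
`Hom_C(I, -)`. -/
theorem day_convolution_monoidal (C : Type) [SmallCategory C]
    [MonoidalCategory C] :
    ∃ M : MonoidalCategory (C ⥤ Type),
      (∀ F G : C ⥤ Type,
        Nonempty ((@MonoidalCategoryStruct.tensorObj _ _ M.toMonoidalCategoryStruct F G) ≅ dayTensor F G)) ∧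
      Nonempty ((@MonoidalCategoryStruct.tensorUnit _ _ M.toMonoidalCategoryStruct) ≅
        coyoneda.obj (op (𝟙_ C))) :=
  ⟨Monoidal.transport (DayFunctor.equiv C Type), fun F G => ⟨tensorFunctorIsoDayTensor F G⟩,
    ⟨unitFunctorIsoCoyoneda C⟩⟩
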